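/- arXiv:0708.1733 — 3 statements merged into one kernel-verified Lean document; each statement's English description precedes it below -/
import Mathlib

section
/- If ν is a probability measure on trees such that the marginal probabilities p_v = ν({y : y(v)=1}) satisfy p_{av} ≤ p_v for all v and a (which holds automatically since ν is supported on trees), then the function t defined by t(v) = 1 iff p_v ≥ 1/2 is itself a tree and is a d-mean of ν. -/
open MeasureTheory ENNReal

/-!
Integrating the weighted Hamming distance term by term gives
`∫ d(s, ·) dν = ∑_v φ(v) · ν {y | y v ≠ s v}`, so a d-mean is obtained by minimizing each
disagreement probability separately, which the majority vote `t v = [p_v ≥ 1/2]` does.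
Monotonicity of `p` along edges makes this vote a tree.
-/

section Majority

variable {Ω : Type*} [MeasurableSpace Ω] {μ : Measure Ω} [IsProbabilityMeasure μ]

lemma measure_compl_le_self_of_half_le {A : Set Ω} (hA : MeasurableSet A) (h : 1 / 2 ≤ μ A) :
    μ Aᶜ ≤ μ A :=
  calc μ Aᶜ = 1 - μ A := prob_compl_eq_one_sub hA
    _ ≤ 1 - 1 / 2 := tsub_le_tsub_left h 1
    _ = 1 / 2 := by rw [one_div, ENNReal.one_sub_inv_two]
    _ ≤ μ A := h

lemma measure_ne_majority_le {X : Ω → Bool} (hX : Measurable X) {b : Bool}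
    (hb : b = true ↔ 1 / 2 ≤ μ {ω | X ω = true}) (c : Bool) :
    μ {ω | X ω ≠ b} ≤ μ {ω | X ω ≠ c} := by
  obtain rfl | rfl : c = b ∨ c = !b := by cases b <;> cases c <;> simp
  · rfl
  have hmeas (b : Bool) : MeasurableSet {ω | X ω = b} := hX (measurableSet_singleton b)
  simp only [ne_eq, Bool.not_eq_not, ← Set.compl_ofPred]
  cases b with
  | true => exact measure_compl_le_self_of_half_le (hmeas true) (hb.mp rfl)
  | false =>
    have hfalse : {ω | X ω = false} = {ω | X ω = true}ᶜ := by ext; simp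
    have hlt : μ {ω | X ω = true} ≤ 1 / 2 := (not_le.mp (mt hb.mpr Bool.false_ne_true)).le
    refine measure_compl_le_self_of_half_le (hmeas false) ?_
    calc (1 / 2 : ℝ≥0∞) = 1 - 1 / 2 := by rw [one_div, ENNReal.one_sub_inv_two]
      _ ≤ 1 - μ {ω | X ω = true} := tsub_le_tsub_left hlt 1
      _ = μ {ω | X ω = false} := by rw [hfalse, prob_compl_eq_one_sub (hmeas true)]

end Majority

section WeightedHamming

variable {ι : Type*} {φ : ι → ℝ}

lemma summable_measureReal_mul {Ω : Type*} [MeasurableSpace Ω] {μ : Measure Ω}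
    [IsFiniteMeasure μ] (hφ : Summable φ) (s : ι → Set Ω) :
    Summable fun v => μ.real (s v) * φ v :=
  (hφ.abs.mul_left (μ.real Set.univ)).of_norm_bounded fun v => by
    rw [norm_mul, Real.norm_eq_abs, abs_of_nonneg measureReal_nonneg]
    exact mul_le_mul_of_nonneg_right (measureReal_mono (Set.subset_univ _)) (abs_nonneg _)

lemma integral_tsum_ite_apply_eq [Countable ι] {ν : Measure (ι → Bool)} [IsFiniteMeasure ν]
    (hφ : Summable φ) (t : ι → Bool) :
    ∫ y, (∑' v, if t v = y v then (0 : ℝ) else φ v) ∂ν = ∑' v, ν.real {y | y v ≠ t v} * φ v := by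
  have hmeas (v : ι) : MeasurableSet {y : ι → Bool | y v ≠ t v} :=
    (measurableSet_eq_fun (measurable_pi_apply v) measurable_const).compl
  have hind (y : ι → Bool) (v : ι) : (if t v = y v then (0 : ℝ) else φ v) =
      {y : ι → Bool | y v ≠ t v}.indicator (fun _ => φ v) y := by
    by_cases h : t v = y v <;> simp [h, eq_comm]
  simp_rw [hind]
  rw [integral_tsum fun v => (measurable_const.indicator (hmeas v)).aestronglyMeasurable]
  · simp [integral_indicator_const _ (hmeas _), mul_comm]
  · refine ne_top_of_le_ne_top (b := ∑' v, ‖φ v‖ₑ * ν Set.univ) ?_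
      (ENNReal.tsum_le_tsum fun v => ?_)
    · rw [ENNReal.tsum_mul_right]
      refine mul_ne_top (tsum_enorm_ne_top_iff_summable_norm.2 ?_) (measure_ne_top _ _)
      simpa only [Real.norm_eq_abs] using hφ.abs
    · rw [← lintegral_const]
      exact lintegral_mono fun y => enorm_indicator_le_enorm_self _ _

end WeightedHamming

/-- If `ν` is a probability measure on trees (node set: finite strings over
`Fin m`) whose marginals `p v = ν {y : y v = 1}` satisfy `p (a :: v) ≤ p v`, then the
function `t` with `t v = 1 ↔ p v ≥ 1/2` is itself a tree and is a d-mean of `ν`. -/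
theorem marginal_majority_tree_is_dMean (m : ℕ) (φ : List (Fin m) → ℝ)
    (hφpos : ∀ v, 0 < φ v) (hφsum : Summable φ)
    (d : (List (Fin m) → Bool) → (List (Fin m) → Bool) → ℝ)
    (hd : ∀ t y, d t y = ∑' v, if t v = y v then (0 : ℝ) else φ v)
    (ν : Measure (List (Fin m) → Bool)) [IsProbabilityMeasure ν]
    (hmono : ∀ (v : List (Fin m)) (a : Fin m),
      ν {y | y (a :: v) = true} ≤ ν {y | y v = true})
    (t : List (Fin m) → Bool)
    (ht : ∀ v, t v = true ↔ (1 / 2 : ℝ≥0∞) ≤ ν {y | y v = true}) :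
    (∀ (v : List (Fin m)) (a : Fin m), t (a :: v) ≤ t v) ∧
    (∀ s : List (Fin m) → Bool, ∫ y, d t y ∂ν ≤ ∫ y, d s y ∂ν) := by
  refine ⟨fun v a => ?_, fun s => ?_⟩
  · cases h : t (a :: v)
    · exact Bool.false_le _
    · rw [(ht v).mpr (((ht _).mp h).trans (hmono v a))]
  · simp_rw [hd, integral_tsum_ite_apply_eq hφsum]
    refine (summable_measureReal_mul hφsum _).tsum_le_tsum (fun v => ?_)
      (summable_measureReal_mul hφsum _)
    have hdisagree := measure_ne_majority_le (μ := ν) (measurable_pi_apply v) (ht v) (s v)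
    exact mul_le_mul_of_nonneg_right (ENNReal.toReal_mono (measure_ne_top _ _) hdisagree)
      (hφpos v).le
end

section
/- For the binary binomial Galton-Watson random tree with parameter p ∈ [1/2, 1], the d-mean (expected mean tree) is the deterministic full tree of depth k₀, i.e., the tree containing exactly the nodes v with gen(v) ≤ k₀, where k₀ = max{k ≥ 1 : p^{k−1} ≥ 1/2} (with k₀ = ∞ excluded by assuming p < 1). For p < 1/2, the d-mean is the tree containing only the root. -/
/-!
The expected weighted Hamming distance `∫ d(t, ·) dν` equals `∑ φ v · ν(t v ≠ y v)`, so it is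
minimised node by node: a tree is a `d`-mean as soon as it contains every node present with
probability `> 1/2` and no node present with probability `< 1/2`. For the Galton–Watson tree the
presence probability `p ^ |v|` is non-increasing in the depth of `v`, so these trees are full
trees of some depth: depth `k₀` when `1/2 ≤ p`, and the root alone when `p < 1/2`.
-/

open MeasureTheory

noncomputable def weightedHammingDist {ι : Type*} (φ : ι → ℝ) (t y : ι → Bool) : ℝ :=
  ∑' v, if t v = y v then 0 else φ v

def IsMarginalMajority {ι : Type*} (ν : Measure (ι → Bool)) (t : ι → Bool) : Prop :=
  ∀ v, (t v = true → 1 / 2 ≤ ν.real {y | y v = true}) ∧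
    (t v = false → ν.real {y | y v = true} ≤ 1 / 2)

section

variable {ι : Type*} {ν : Measure (ι → Bool)} [IsProbabilityMeasure ν]

lemma measurableSet_setOf_apply (P : Bool → Prop) (v : ι) :
    MeasurableSet {y : ι → Bool | P (y v)} :=
  show MeasurableSet ((fun y : ι → Bool => y v) ⁻¹' {c | P c}) from
    measurable_pi_apply v .of_discrete

lemma integral_weightedHammingDist [Countable ι] {φ : ι → ℝ}
    (hφ : Summable φ) (t : ι → Bool) :
    ∫ y, weightedHammingDist φ t y ∂ν = ∑' v, ν.real {y | t v ≠ y v} * φ v := by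
  have hF : ∀ v y, (if t v = y v then 0 else φ v)
      = {y : ι → Bool | t v ≠ y v}.indicator (fun _ => φ v) y := by
    intro v y
    by_cases h : t v = y v <;> simp [h]
  have hnorm : ∀ v, ∫ y, ‖{y : ι → Bool | t v ≠ y v}.indicator (fun _ => φ v) y‖ ∂ν
      = ν.real {y | t v ≠ y v} * ‖φ v‖ := by
    intro v
    simp only [norm_indicator_eq_indicator_norm]
    rw [integral_indicator_const _ (measurableSet_setOf_apply _ v), smul_eq_mul]
  simp only [weightedHammingDist, hF]
  rw [← integral_tsum_of_summable_integral_norm]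
  · refine tsum_congr fun v => ?_
    rw [integral_indicator_const _ (measurableSet_setOf_apply _ v), smul_eq_mul]
  · exact fun v => (integrable_const (φ v)).indicator (measurableSet_setOf_apply _ v)
  · simp only [hnorm]
    exact hφ.norm.of_nonneg_of_le (fun v => by positivity)
      fun v => mul_le_of_le_one_left (norm_nonneg _) measureReal_le_one

lemma measureReal_setOf_apply_ne (b : Bool) (v : ι) :
    ν.real {y | b ≠ y v} =
      if b then 1 - ν.real {y | y v = true} else ν.real {y | y v = true} := by
  cases b
  · change ν.real {y | false ≠ y v} = ν.real {y | y v = true}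
    congr 1; ext y; cases y v <;> simp
  · change ν.real {y | true ≠ y v} = 1 - ν.real {y | y v = true}
    rw [← probReal_compl_eq_one_sub (measurableSet_setOf_apply (· = true) v)]
    congr 1; ext y; cases y v <;> simp

lemma IsMarginalMajority.measureReal_setOf_apply_ne_le {t : ι → Bool}
    (ht : IsMarginalMajority ν t) (v : ι) (b : Bool) :
    ν.real {y | t v ≠ y v} ≤ ν.real {y | b ≠ y v} := by
  rw [measureReal_setOf_apply_ne, measureReal_setOf_apply_ne]
  obtain ⟨h_true, h_false⟩ := ht v
  cases htv : t v <;> cases b <;> simp_all <;> linarith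

theorem IsMarginalMajority.integral_weightedHammingDist_le [Countable ι] {φ : ι → ℝ}
    (hφ : Summable φ) (hφ_nonneg : ∀ v, 0 ≤ φ v) {t : ι → Bool}
    (ht : IsMarginalMajority ν t) (s : ι → Bool) :
    ∫ y, weightedHammingDist φ t y ∂ν ≤ ∫ y, weightedHammingDist φ s y ∂ν := by
  have hsum (u : ι → Bool) : Summable fun v => ν.real {y | u v ≠ y v} * φ v :=
    hφ.of_nonneg_of_le (fun v => mul_nonneg measureReal_nonneg (hφ_nonneg v))
      fun v => mul_le_of_le_one_left (hφ_nonneg v) measureReal_le_one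
  rw [integral_weightedHammingDist hφ, integral_weightedHammingDist hφ]
  exact (hsum t).tsum_le_tsum (fun v => mul_le_mul_of_nonneg_right
    (ht.measureReal_setOf_apply_ne_le v (s v)) (hφ_nonneg v)) (hsum s)

end

section

variable {α : Type*} {ν : Measure (List α → Bool)} {p : ℝ}

lemma isMarginalMajority_depth_le (hν : ∀ v, ν.real {y | y v = true} = p ^ v.length)
    {k₀ : ℕ} (hk : ∀ k : ℕ, 1 ≤ k → ((1 / 2 : ℝ) ≤ p ^ (k - 1) ↔ k ≤ k₀)) :
    IsMarginalMajority ν fun v => decide (v.length + 1 ≤ k₀) := by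
  intro v
  have hv := hk (v.length + 1) (by omega)
  rw [Nat.add_sub_cancel] at hv
  simp only [hν, decide_eq_true_eq, decide_eq_false_iff_not]
  exact ⟨hv.2, fun h => (not_le.1 (mt hv.1 h)).le⟩

lemma isMarginalMajority_root (hν : ∀ v, ν.real {y | y v = true} = p ^ v.length)
    (hp0 : 0 ≤ p) (hp : p < 1 / 2) :
    IsMarginalMajority ν fun v => decide (v = []) := by
  rintro (_ | ⟨a, w⟩)
  · norm_num [hν]
  · simp only [hν, decide_eq_true_eq, decide_eq_false_iff_not, reduceCtorEq, false_implies,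
      true_and, not_false_eq_true, forall_const]
    exact (pow_le_of_le_one hp0 (by linarith) (by simp)).trans hp.le

end

theorem galtonWatson_dMean_general (p : ℝ) (hp0 : 0 ≤ p)
    (φ : List (Fin 2) → ℝ) (hφpos : ∀ v, 0 < φ v) (hφsum : Summable φ)
    (d : (List (Fin 2) → Bool) → (List (Fin 2) → Bool) → ℝ)
    (hd : ∀ t y, d t y = ∑' v, if t v = y v then (0 : ℝ) else φ v)
    (ν : Measure (List (Fin 2) → Bool)) [IsProbabilityMeasure ν]
    (hmarg : ∀ v : List (Fin 2), ν {y | y v = true} = ENNReal.ofReal (p ^ v.length)) :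
    ((1 / 2 : ℝ) ≤ p →
      ∀ k₀ : ℕ, 1 ≤ k₀ →
        (∀ k : ℕ, 1 ≤ k → ((1 / 2 : ℝ) ≤ p ^ (k - 1) ↔ k ≤ k₀)) →
        ∀ s : List (Fin 2) → Bool,
          ∫ y, d (fun v => decide (v.length + 1 ≤ k₀)) y ∂ν ≤ ∫ y, d s y ∂ν) ∧
    (p < 1 / 2 →
      ∀ s : List (Fin 2) → Bool,
        ∫ y, d (fun v => decide (v = [])) y ∂ν ≤ ∫ y, d s y ∂ν) := by
  obtain rfl : d = weightedHammingDist φ := funext fun t => funext (hd t)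
  have hν (v : List (Fin 2)) : ν.real {y | y v = true} = p ^ v.length := by
    rw [measureReal_def, hmarg, ENNReal.toReal_ofReal (pow_nonneg hp0 _)]
  have hφ_nonneg (v : List (Fin 2)) : 0 ≤ φ v := (hφpos v).le
  exact ⟨fun _ _ _ hk => (isMarginalMajority_depth_le hν hk).integral_weightedHammingDist_le
      hφsum hφ_nonneg,
    fun hp => (isMarginalMajority_root hν hp0 hp).integral_weightedHammingDist_le
      hφsum hφ_nonneg⟩

/-- For the binary binomial Galton-Watson tree with parameter `p`
(marginal presence probability of a node `v` of generation `|v| + 1` equal to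
`p^|v|`), if `1/2 ≤ p < 1` then the full tree of depth `k₀`, with
`k₀ = max {k ≥ 1 : p^(k−1) ≥ 1/2}`, is a d-mean; and if `p < 1/2` the tree
containing only the root is a d-mean. -/
theorem galtonWatson_dMean (p : ℝ) (hp0 : 0 ≤ p) (hp1 : p < 1)
    (φ : List (Fin 2) → ℝ) (hφpos : ∀ v, 0 < φ v) (hφsum : Summable φ)
    (d : (List (Fin 2) → Bool) → (List (Fin 2) → Bool) → ℝ)
    (hd : ∀ t y, d t y = ∑' v, if t v = y v then (0 : ℝ) else φ v)
    (ν : Measure (List (Fin 2) → Bool)) [IsProbabilityMeasure ν]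
    (hmarg : ∀ v : List (Fin 2), ν {y | y v = true} = ENNReal.ofReal (p ^ v.length)) :
    ((1 / 2 : ℝ) ≤ p →
      ∀ k₀ : ℕ, 1 ≤ k₀ →
        (∀ k : ℕ, 1 ≤ k → ((1 / 2 : ℝ) ≤ p ^ (k - 1) ↔ k ≤ k₀)) →
        ∀ s : List (Fin 2) → Bool,
          ∫ y, d (fun v => decide (v.length + 1 ≤ k₀)) y ∂ν ≤ ∫ y, d s y ∂ν) ∧
    (p < 1 / 2 →
      ∀ s : List (Fin 2) → Bool,
        ∫ y, d (fun v => decide (v = [])) y ∂ν ≤ ∫ y, d s y ∂ν) :=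
  galtonWatson_dMean_general p hp0 φ hφpos hφsum d hd ν hmarg
end

section
/- For i.i.d. random trees T₁, T₂, … with law ν and any node v with ν({t : t(v)=1}) > 1/2, almost surely the majority-vote empirical mean tree t*_n (defined by t*_n(v)=1 iff #{i ≤ n : Tᵢ(v)=1} ≥ n/2) satisfies t*_n(v) = 1 for all sufficiently large n. Consequently, if all marginals of ν avoid the value 1/2, then t*_n converges almost surely (in the metric d) to the unique d-mean of ν. -/
open MeasureTheory ProbabilityTheory ENNReal Filter Topology

/-!
By the strong law of large numbers for the indicators of `{t | t v = true}`, the proportion of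
votes for `1` at a node `v` converges almost surely to `ν {t | t v = true}`; when this limit is not
`1 / 2`, the majority vote at `v` is therefore eventually the right one. As there are countably
many nodes, this holds almost surely at all of them simultaneously, and since `φ` is summable,
dominated convergence for series turns eventual agreement at every node into `d`-convergence.
-/

theorem strong_law_ae_frequency {Ω α : Type*} [MeasurableSpace Ω] [MeasurableSpace α]
    {P : Measure Ω} {ν : Measure α} [IsFiniteMeasure ν] {T : ℕ → Ω → α}
    (hmeas : ∀ i, Measurable (T i)) (hindep : Pairwise fun i j => IndepFun (T i) (T j) P)
    (hdist : ∀ i, P.map (T i) = ν) {s : Set α} (hs : MeasurableSet s) [DecidablePred (· ∈ s)] :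
    ∀ᵐ ω ∂P, Tendsto
      (fun n : ℕ => (((Finset.range n).filter fun i => T i ω ∈ s).card : ℝ) / n) atTop
      (𝓝 (ν.real s)) := by
  set X : ℕ → Ω → ℝ := fun i => s.indicator 1 ∘ T i
  have hind : Measurable (s.indicator (1 : α → ℝ)) := measurable_one.indicator hs
  have hX : ∀ i, Measurable (X i) := fun i => hind.comp (hmeas i)
  have hmap : ∀ i, P.map (X i) = ν.map (s.indicator 1) := fun i => by
    rw [← hdist i, Measure.map_map hind (hmeas i)]
  have hmean : P[X 0] = ν.real s := by
    change ∫ ω, s.indicator 1 (T 0 ω) ∂P = _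
    rw [← integral_map (hmeas 0).aemeasurable hind.aestronglyMeasurable, hdist 0]
    exact integral_indicator_one hs
  have hint : Integrable (X 0) P := by
    rw [← integrable_map_measure hind.aestronglyMeasurable (hmeas 0).aemeasurable, hdist 0]
    exact (integrable_const 1).indicator hs
  have hslln := strong_law_ae_real X hint (fun i j hij => (hindep hij).comp hind hind)
    fun i => ⟨(hX i).aemeasurable, (hX 0).aemeasurable, by rw [hmap i, hmap 0]⟩
  filter_upwards [hslln] with ω hω
  rw [hmean] at hω
  refine hω.congr fun n => ?_
  simp [X, Set.indicator_apply, Finset.sum_boole]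

theorem eventually_decide_le_two_mul_eq_of_tendsto_div {k : ℕ → ℕ} {p : ℝ}
    (hk : Tendsto (fun n => (k n : ℝ) / n) atTop (𝓝 p)) (hp : p ≠ 1 / 2) :
    ∀ᶠ n in atTop, decide (n ≤ 2 * k n) = decide (1 / 2 < p) := by
  rcases hp.lt_or_gt with hlt | hgt
  · filter_upwards [hk.eventually (eventually_lt_nhds hlt), eventually_gt_atTop 0] with n hn hn0
    rw [div_lt_iff₀ (by positivity)] at hn
    have : ¬ n ≤ 2 * k n := fun h => by
      have : (n : ℝ) ≤ 2 * k n := by exact_mod_cast h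
      linarith
    rw [decide_eq_false this, decide_eq_false (not_lt.2 hlt.le)]
  · filter_upwards [hk.eventually (eventually_gt_nhds hgt), eventually_gt_atTop 0] with n hn hn0
    rw [lt_div_iff₀ (by positivity)] at hn
    have : n ≤ 2 * k n := by
      have : (n : ℝ) ≤ 2 * k n := by linarith
      exact_mod_cast this
    rw [decide_eq_true this, decide_eq_true hgt]

theorem tendsto_tsum_ite_eq_zero_of_eventually_eq {ι V β : Type*} [DecidableEq β] {l : Filter ι}
    {φ : V → ℝ} (hφ : ∀ v, 0 ≤ φ v) (hφsum : Summable φ) {t : ι → V → β} {y : V → β}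
    (ht : ∀ v, ∀ᶠ i in l, t i v = y v) :
    Tendsto (fun i => ∑' v, if t i v = y v then (0 : ℝ) else φ v) l (𝓝 0) := by
  have hterm : ∀ v, Tendsto (fun i => if t i v = y v then (0 : ℝ) else φ v) l (𝓝 0) :=
    fun v => tendsto_const_nhds.congr' <| (ht v).mono fun i hi => by simp [hi]
  have hbound : ∀ i v, ‖if t i v = y v then (0 : ℝ) else φ v‖ ≤ φ v := fun i v => by
    split_ifs <;> simp [abs_of_nonneg, hφ v]
  simpa using tendsto_tsum_of_dominated_convergence hφsum hterm (.of_forall hbound)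

theorem half_lt_toReal_iff {m : ℝ≥0∞} (hm : m ≠ ∞) : 1 / 2 < m.toReal ↔ 1 / 2 < m := by
  rw [← ENNReal.toReal_lt_toReal (by norm_num) hm]
  norm_num

theorem toReal_eq_half_iff {m : ℝ≥0∞} (hm : m ≠ ∞) : m.toReal = 1 / 2 ↔ m = 1 / 2 := by
  rw [← ENNReal.toReal_eq_toReal_iff' hm (by norm_num)]
  norm_num

theorem majority_vote_consistency_general {V : Type*} [Countable V] (φ : V → ℝ)
    (hφpos : ∀ v, 0 < φ v) (hφsum : Summable φ)
    (d : (V → Bool) → (V → Bool) → ℝ)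
    (hd : ∀ t y, d t y = ∑' v, if t v = y v then (0 : ℝ) else φ v)
    {Ω : Type*} [MeasurableSpace Ω] (P : Measure Ω)
    (ν : Measure (V → Bool)) [IsProbabilityMeasure ν]
    (T : ℕ → Ω → (V → Bool))
    (hmeas : ∀ i, Measurable (T i))
    (hindep : iIndepFun T P)
    (hdist : ∀ i, Measure.map (T i) P = ν)
    (tstar : ℕ → Ω → V → Bool)
    (htstar : ∀ n ω v, tstar n ω v
      = decide (n ≤ 2 * ((Finset.range n).filter fun i => T i ω v = true).card)) :
    (∀ v : V, (1 / 2 : ℝ≥0∞) < ν {t | t v = true} →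
      ∀ᵐ ω ∂P, ∃ N : ℕ, ∀ n ≥ N, tstar n ω v = true) ∧
    ((∀ v : V, ν {t | t v = true} ≠ (1 / 2 : ℝ≥0∞)) →
      ∀ᵐ ω ∂P, Tendsto
        (fun n => d (tstar n ω) (fun v => decide ((1 / 2 : ℝ≥0∞) < ν {t | t v = true})))
        atTop (nhds 0)) := by
  have hfreq : ∀ v, ∀ᵐ ω ∂P, Tendsto
      (fun n : ℕ => (((Finset.range n).filter fun i => T i ω v = true).card : ℝ) / n) atTop
      (𝓝 (ν.real {t | t v = true})) := fun v =>
    strong_law_ae_frequency (s := {t | t v = true}) hmeas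
      (fun i j hij => hindep.indepFun hij) hdist
      (measurableSet_eq_fun (measurable_pi_apply v) measurable_const)
  have hstable : ∀ v, ν {t | t v = true} ≠ 1 / 2 → ∀ᵐ ω ∂P, ∀ᶠ n in atTop,
      tstar n ω v = decide ((1 / 2 : ℝ≥0∞) < ν {t | t v = true}) := by
    intro v hv
    have hfin := measure_ne_top ν {t | t v = true}
    filter_upwards [hfreq v] with ω hω
    simpa only [htstar, measureReal_def, half_lt_toReal_iff hfin] using
      eventually_decide_le_two_mul_eq_of_tendsto_div hω ((toReal_eq_half_iff hfin).not.2 hv)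
  refine ⟨fun v hv => ?_, fun hall => ?_⟩
  · filter_upwards [hstable v hv.ne'] with ω hω
    obtain ⟨N, hN⟩ := eventually_atTop.1 hω
    exact ⟨N, fun n hn => (hN n hn).trans (decide_eq_true hv)⟩
  · filter_upwards [ae_all_iff.2 fun v => hstable v (hall v)] with ω hω
    simpa only [hd] using
      tendsto_tsum_ite_eq_zero_of_eventually_eq (fun v => (hφpos v).le) hφsum hω

/-- For i.i.d. random trees `T 1, T 2, …` with law `ν` and any node `v`
with `ν {t : t v = 1} > 1/2`, almost surely the majority-vote empirical mean tree
`t*_n` (with `t*_n v = 1 ↔ #{i ≤ n : T i v = 1} ≥ n/2`) satisfies `t*_n v = 1` for all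
sufficiently large `n`.  Consequently, if no marginal of `ν` equals `1/2`, then `t*_n`
converges almost surely in the metric `d` to the unique d-mean of `ν`, namely the
function `v ↦ 1 ↔ ν {t : t v = 1} > 1/2`. -/
theorem majority_vote_consistency {V : Type*} [Countable V] (φ : V → ℝ)
    (hφpos : ∀ v, 0 < φ v) (hφsum : Summable φ)
    (d : (V → Bool) → (V → Bool) → ℝ)
    (hd : ∀ t y, d t y = ∑' v, if t v = y v then (0 : ℝ) else φ v)
    {Ω : Type*} [MeasurableSpace Ω] (P : Measure Ω) [IsProbabilityMeasure P]
    (ν : Measure (V → Bool)) [IsProbabilityMeasure ν]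
    (T : ℕ → Ω → (V → Bool))
    (hmeas : ∀ i, Measurable (T i))
    (hindep : iIndepFun T P)
    (hdist : ∀ i, Measure.map (T i) P = ν)
    (tstar : ℕ → Ω → V → Bool)
    (htstar : ∀ n ω v, tstar n ω v
      = decide (n ≤ 2 * ((Finset.range n).filter fun i => T i ω v = true).card)) :
    (∀ v : V, (1 / 2 : ℝ≥0∞) < ν {t | t v = true} →
      ∀ᵐ ω ∂P, ∃ N : ℕ, ∀ n ≥ N, tstar n ω v = true) ∧
    ((∀ v : V, ν {t | t v = true} ≠ (1 / 2 : ℝ≥0∞)) →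
      ∀ᵐ ω ∂P, Tendsto
        (fun n => d (tstar n ω) (fun v => decide ((1 / 2 : ℝ≥0∞) < ν {t | t v = true})))
        atTop (nhds 0)) :=
  majority_vote_consistency_general φ hφpos hφsum d hd P ν T hmeas hindep hdist tstar htstar
end
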